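/- Let u be a nonempty word of length L over a finite alphabet A with alph(u) = A, with arch-period p_u, transient T_u and span Δ_u. Then T_u + Δ_u ≤ (|A| + 1)·L. -/

import Mathlib

/-!
Write `n k = α^[k] 0`. Since `α (i + L) = α i + L`, the residues `n k % L` form an orbit of
the map `r ↦ α r % L`; hence, if `m` is the first index whose residue repeats an earlier one,
`K_u + p_u ≤ m` and `T_u + Δ_u = n (K_u + p_u) ≤ n m`.

To bound `n m`, count the arches `[n k, n (k+1))`, `k < m`, containing a multiple of `L`: as
arches have length at most `L`, `n m` is at most `L` times their number. The last letter of an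
arch occurs nowhere earlier in it, so if the arch contains the boundary `q * L`, then
`n (k+1) - 1 - q * L` is the first position of that letter in `u`. Thus the residue of `n (k+1)`,
which is distinct for distinct `k < m - 1`, is determined by the last letter, and at most
`|A| + 1` arches before `n m` cross a boundary.
-/

variable {A : Type*}

/-- Simon's congruence of order `k`: `u` and `v` have the same subwords of length ≤ k. -/
def SimonCong (k : ℕ) (u v : List A) : Prop :=
  ∀ s : List A, s.length ≤ k → (s.Sublist u ↔ s.Sublist v)

/-- Subword distance `δ(u,v) = sup {k | u ∼ₖ v} ∈ ℕ∞`. -/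
noncomputable def sdelta (u v : List A) : ℕ∞ :=
  sSup {d : ℕ∞ | ∃ k : ℕ, d = k ∧ SimonCong k u v}

/-- Right side distance `r(u,t) = δ(u, u·t)`. -/
noncomputable def rdist (u t : List A) : ℕ∞ := sdelta u (u ++ t)

/-- Left side distance `ℓ(t,u) = δ(t·u, u)`. -/
noncomputable def ldist (t u : List A) : ℕ∞ := sdelta (t ++ u) u

/-- Piecewise complexity `h(u)`: least `n` such that any `v` with `u ∼ₙ v` equals `u`. -/
noncomputable def pcHeight (u : List A) : ℕ :=
  sInf {n : ℕ | ∀ v : List A, SimonCong n u v → v = u}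

/-- `u` is `m`-reduced: no strict subword of `u` is `∼ₘ`-equivalent to `u`. -/
def Reduced (m : ℕ) (u : List A) : Prop :=
  ∀ u' : List A, u'.Sublist u → u' ≠ u → ¬ SimonCong m u u'

/-- Piecewise minimality index `ρ(u)`: least `m` such that `u` is `m`-reduced. -/
noncomputable def pcRho (u : List A) : ℕ := sInf {m : ℕ | Reduced m u}

/-- An `A`-arch: contains every letter of `A` but no strict prefix does. -/
def IsArch (A : Type*) [Fintype A] (s : List A) : Prop :=
  (∀ a : A, a ∈ s) ∧ ∀ t : List A, t <+: s → t ≠ s → ∃ a : A, a ∉ t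

/-- The infinite periodic word `u^ω`. -/
def omegaWord (u : List A) (hu : u ≠ []) (i : ℕ) : A :=
  u.get ⟨i % u.length, Nat.mod_lt i (List.length_pos_iff.mpr hu)⟩

/-- The arch-jumping function `α` on `u^ω`: `α(i)` is the least `j > i` such that
every letter of `A` occurs among positions `i, …, j-1` of `u^ω`. -/
noncomputable def archJump (u : List A) (hu : u ≠ []) (i : ℕ) : ℕ :=
  sInf {j : ℕ | i < j ∧ ∀ a : A, ∃ m : ℕ, i ≤ m ∧ m < j ∧ omegaWord u hu m = a}

/-- `p` is an arch-period of `u` starting at `i`. -/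
def IsArchPeriodAt (u : List A) (hu : u ≠ []) (i p : ℕ) : Prop :=
  0 < p ∧ ∃ k : ℕ, (archJump u hu)^[k + p] i ≡ (archJump u hu)^[k] i [MOD u.length]

/-- The arch-period of `u`: the least arch-period starting at 0. -/
noncomputable def archPeriod (u : List A) (hu : u ≠ []) : ℕ :=
  sInf {p : ℕ | IsArchPeriodAt u hu 0 p}

/-- `K_u`: the least `k` with `α^{k+p}(0) ≡ α^k(0) (mod L)`. -/
noncomputable def archTransientIndex (u : List A) (hu : u ≠ []) : ℕ :=
  sInf {k : ℕ |
    (archJump u hu)^[k + archPeriod u hu] 0 ≡ (archJump u hu)^[k] 0 [MOD u.length]}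

/-- The transient `T_u = α^{K_u}(0)`. -/
noncomputable def archTransient (u : List A) (hu : u ≠ []) : ℕ :=
  (archJump u hu)^[archTransientIndex u hu] 0

/-- The span `Δ_u = α^{K_u+p_u}(0) − α^{K_u}(0)`. -/
noncomputable def archSpan (u : List A) (hu : u ≠ []) : ℕ :=
  (archJump u hu)^[archTransientIndex u hu + archPeriod u hu] 0 - archTransient u hu

/-- `u^n`: the `n`-fold concatenation of `u`. -/
def listPow (u : List A) (n : ℕ) : List A := (List.replicate n u).flatten

open Finset Function

theorem Function.IsPeriodicPt.of_isPeriodicPt_iterate {α : Type*} {f : α → α} {x : α}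
    {j k p q : ℕ} (hj : IsPeriodicPt f q (f^[j] x)) (hq : 0 < q)
    (hk : IsPeriodicPt f p (f^[k] x)) : IsPeriodicPt f p (f^[j] x) := by
  have hkq : f^[k * q] (f^[j] x) = f^[j] x := (hj.const_mul k).eq
  have hk_le : k ≤ k * q := Nat.le_mul_of_pos_right k hq
  rw [← hkq, ← iterate_add_apply, show k * q + j = (k * q + j - k) + k by omega,
    iterate_add_apply]
  exact hk.apply_iterate _

theorem exists_repeat_injOn_Iio {β : Type*} {f : ℕ → β} {t : Set β} (ht : t.Finite)
    (hf : ∀ k, f k ∈ t) : ∃ m, (∃ j < m, f j = f m) ∧ Set.InjOn f (Set.Iio m) := by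
  classical
  have hrep : ∃ m, ∃ j < m, f j = f m := by
    obtain ⟨j, m, hjm, h⟩ := ht.exists_lt_map_eq_of_forall_mem hf
    exact ⟨m, j, hjm, h⟩
  refine ⟨Nat.find hrep, Nat.find_spec hrep, fun a ha b hb hab => ?_⟩
  by_contra hne
  rcases lt_or_gt_of_ne hne with h | h
  · exact Nat.find_min hrep hb ⟨a, h, hab⟩
  · exact Nat.find_min hrep ha ⟨b, h, hab.symm⟩

def CrossesMultiple (L a b : ℕ) : Prop := ∃ q, a ≤ q * L ∧ q * L < b

open Classical in
theorem le_card_filter_crossesMultiple_mul {n : ℕ → ℕ} {L : ℕ} (h0 : n 0 = 0)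
    (hstep : ∀ k, n (k + 1) ≤ n k + L) (m : ℕ) :
    n m ≤ #{k ∈ range m | CrossesMultiple L (n k) (n (k + 1))} * L := by
  induction m with
  | zero => simp [h0]
  | succ m ih =>
    rw [range_add_one, filter_insert]
    split_ifs with hcross
    · rw [card_insert_of_notMem (by simp), add_one_mul]
      linarith [hstep m]
    · simp only [CrossesMultiple, not_exists, not_and, not_lt] at hcross
      exact hcross _ ih

section ArchJump

variable (u : List A) (hu : u ≠ [])

theorem omegaWord_eq_of_modEq {i j : ℕ} (h : i ≡ j [MOD u.length]) :
    omegaWord u hu i = omegaWord u hu j := by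
  simp only [omegaWord]
  congr 1
  exact Fin.ext h

theorem omegaWord_mul_add (q y : ℕ) :
    omegaWord u hu (q * u.length + y) = omegaWord u hu y :=
  omegaWord_eq_of_modEq u hu (Nat.mul_add_mod' q u.length y)

theorem exists_omegaWord_eq (hA : ∀ a : A, a ∈ u) (a : A) (i : ℕ) :
    ∃ m, i ≤ m ∧ m < i + u.length ∧ omegaWord u hu m = a := by
  obtain ⟨p, hp, rfl⟩ := List.getElem_of_mem (hA a)
  have hi := Nat.div_add_mod i u.length
  have hr := Nat.mod_lt i (Nat.zero_lt_of_lt hp)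
  suffices ∃ m, i ≤ m ∧ m < i + u.length ∧ m % u.length = p by
    obtain ⟨m, him, hmi, hm⟩ := this
    exact ⟨m, him, hmi, by simp [omegaWord, hm]⟩
  by_cases h : i % u.length ≤ p
  · refine ⟨u.length * (i / u.length) + p, by omega, by omega, ?_⟩
    rw [Nat.mul_add_mod, Nat.mod_eq_of_lt hp]
  · refine ⟨u.length * (i / u.length + 1) + p, by rw [Nat.mul_add]; omega,
      by rw [Nat.mul_add]; omega, ?_⟩
    rw [Nat.mul_add_mod, Nat.mod_eq_of_lt hp]

theorem archJump_spec (hA : ∀ a : A, a ∈ u) (i : ℕ) :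
    i < archJump u hu i ∧
      ∀ a : A, ∃ m, i ≤ m ∧ m < archJump u hu i ∧ omegaWord u hu m = a := by
  have hlen : 0 < u.length := List.length_pos_iff.mpr hu
  exact Nat.sInf_mem
    (s := {j | i < j ∧ ∀ a : A, ∃ m, i ≤ m ∧ m < j ∧ omegaWord u hu m = a})
    ⟨i + u.length, by omega, fun a => exists_omegaWord_eq u hu hA a i⟩

theorem archJump_le {i j : ℕ} (hij : i < j)
    (hj : ∀ a : A, ∃ m, i ≤ m ∧ m < j ∧ omegaWord u hu m = a) : archJump u hu i ≤ j :=
  Nat.sInf_le ⟨hij, hj⟩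

theorem archJump_le_add_length (hA : ∀ a : A, a ∈ u) (i : ℕ) :
    archJump u hu i ≤ i + u.length :=
  archJump_le u hu (by simpa using List.length_pos_iff.mpr hu)
    fun a => exists_omegaWord_eq u hu hA a i

theorem archJump_add_length (hA : ∀ a : A, a ∈ u) (i : ℕ) :
    archJump u hu (i + u.length) = archJump u hu i + u.length := by
  obtain ⟨hi, hletters⟩ := archJump_spec u hu hA i
  obtain ⟨hi', hletters'⟩ := archJump_spec u hu hA (i + u.length)
  have hshift (m : ℕ) : omegaWord u hu (m + u.length) = omegaWord u hu m :=
    omegaWord_eq_of_modEq u hu (Nat.add_mod_right m u.length)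
  apply le_antisymm
  · refine archJump_le u hu (by omega) fun a => ?_
    obtain ⟨m, him, hmj, rfl⟩ := hletters a
    exact ⟨m + u.length, by omega, by omega, hshift m⟩
  · suffices archJump u hu i ≤ archJump u hu (i + u.length) - u.length by omega
    refine archJump_le u hu (by omega) fun a => ?_
    obtain ⟨m, him, hmj, rfl⟩ := hletters' a
    refine ⟨m - u.length, by omega, by omega, ?_⟩
    rw [← hshift, Nat.sub_add_cancel (by omega)]

theorem archJump_add_mul_length (hA : ∀ a : A, a ∈ u) (i c : ℕ) :
    archJump u hu (i + c * u.length) = archJump u hu i + c * u.length := by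
  induction c with
  | zero => simp
  | succ c ih => rw [add_one_mul, ← add_assoc, archJump_add_length u hu hA, ih, add_assoc]

theorem strictMono_iterate_archJump (hA : ∀ a : A, a ∈ u) (i : ℕ) :
    StrictMono fun k => (archJump u hu)^[k] i :=
  strictMono_nat_of_lt_succ fun k => by
    simpa only [iterate_succ_apply'] using (archJump_spec u hu hA _).1

theorem omegaWord_ne_archJump_sub_one (hA : ∀ a : A, a ∈ u) {i m : ℕ} (him : i ≤ m)
    (hm : m < archJump u hu i - 1) :
    omegaWord u hu m ≠ omegaWord u hu (archJump u hu i - 1) := by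
  intro heq
  obtain ⟨hi, hletters⟩ := archJump_spec u hu hA i
  suffices archJump u hu i ≤ archJump u hu i - 1 by omega
  refine archJump_le u hu (by omega) fun a => ?_
  obtain ⟨m', him', hm', rfl⟩ := hletters a
  rcases Nat.lt_or_ge m' (archJump u hu i - 1) with h | h
  · exact ⟨m', him', h, rfl⟩
  · exact ⟨m, him, hm, by rw [heq, show m' = archJump u hu i - 1 by omega]⟩

theorem archJump_modEq_of_crossesMultiple (hA : ∀ a : A, a ∈ u) {i j : ℕ}
    (hi : CrossesMultiple u.length i (archJump u hu i))
    (hj : CrossesMultiple u.length j (archJump u hu j))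
    (h : omegaWord u hu (archJump u hu i - 1) = omegaWord u hu (archJump u hu j - 1)) :
    archJump u hu i ≡ archJump u hu j [MOD u.length] := by
  -- The offset of the last letter past the boundary is the first position of that letter in `u`.
  have hfirst {i q : ℕ} (hiq : i ≤ q * u.length) (hqi : q * u.length < archJump u hu i) :
      omegaWord u hu (archJump u hu i - 1 - q * u.length) = omegaWord u hu (archJump u hu i - 1) ∧
        ∀ y < archJump u hu i - 1 - q * u.length,
          omegaWord u hu y ≠ omegaWord u hu (archJump u hu i - 1) := by
    refine ⟨?_, fun y hy => ?_⟩
    · rw [← omegaWord_mul_add u hu q, Nat.add_sub_cancel' (by omega)]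
    · rw [← omegaWord_mul_add u hu q]
      exact omegaWord_ne_archJump_sub_one u hu hA (by omega) (by omega)
  obtain ⟨q, hiq, hqi⟩ := hi
  obtain ⟨r, hjr, hrj⟩ := hj
  obtain ⟨hi_eq, hi_first⟩ := hfirst hiq hqi
  obtain ⟨hj_eq, hj_first⟩ := hfirst hjr hrj
  have hoffset : archJump u hu i - 1 - q * u.length = archJump u hu j - 1 - r * u.length := by
    rcases lt_trichotomy (archJump u hu i - 1 - q * u.length)
      (archJump u hu j - 1 - r * u.length) with hlt | heq | hgt
    · exact absurd (hi_eq.trans h) (hj_first _ hlt)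
    · exact heq
    · exact absurd (hj_eq.trans h.symm) (hi_first _ hgt)
  rw [Nat.ModEq, show archJump u hu i = q * u.length + (archJump u hu i - q * u.length) by omega,
    show archJump u hu j = r * u.length + (archJump u hu i - q * u.length) by omega,
    Nat.mul_add_mod', Nat.mul_add_mod']

open Classical in
theorem iterate_archJump_le_of_injOn [Fintype A] (hA : ∀ a : A, a ∈ u) {m : ℕ}
    (hinj : Set.InjOn (fun k => (archJump u hu)^[k] 0 % u.length) (Set.Iio m)) :
    (archJump u hu)^[m] 0 ≤ (Fintype.card A + 1) * u.length := by
  set n : ℕ → ℕ := fun k => (archJump u hu)^[k] 0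
  have hsucc (k : ℕ) : n (k + 1) = archJump u hu (n k) := iterate_succ_apply' _ _ _
  have hcount := le_card_filter_crossesMultiple_mul (n := n) (L := u.length) rfl
    (fun k => (hsucc k).trans_le (archJump_le_add_length u hu hA _)) m
  have hlast : #{k ∈ range m | CrossesMultiple u.length (n k) (n (k + 1))} ≤
      #{k ∈ range (m - 1) | CrossesMultiple u.length (n k) (n (k + 1))} + 1 := by
    refine (card_le_card fun k hk => ?_).trans (card_insert_le (m - 1) _)
    simp only [mem_filter, mem_range, mem_insert] at hk ⊢
    by_cases hkm : k = m - 1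
    · exact Or.inl hkm
    · exact Or.inr ⟨by omega, hk.2⟩
  have hletters : #{k ∈ range (m - 1) | CrossesMultiple u.length (n k) (n (k + 1))} ≤
      Fintype.card A := by
    refine card_le_card_of_injOn (fun k => omegaWord u hu (n (k + 1) - 1))
      (fun _ _ => mem_univ _) fun k hk k' hk' heq => ?_
    simp only [coe_filter, mem_range, Set.mem_ofPred_eq] at hk hk'
    dsimp only at heq
    rw [hsucc] at hk hk'
    rw [hsucc, hsucc] at heq
    have := archJump_modEq_of_crossesMultiple u hu hA hk.2 hk'.2 heq
    rw [← hsucc, ← hsucc] at this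
    simpa using hinj (by simp; omega) (by simp; omega) this
  calc n m ≤ _ := hcount
    _ ≤ (Fintype.card A + 1) * u.length := Nat.mul_le_mul_right _ (by omega)

end ArchJump

noncomputable def archJumpMod (u : List A) (hu : u ≠ []) (r : ℕ) : ℕ :=
  archJump u hu r % u.length

section ArchJumpMod

variable (u : List A) (hu : u ≠ [])

theorem archJump_mod (hA : ∀ a : A, a ∈ u) (i : ℕ) :
    archJump u hu i % u.length = archJumpMod u hu (i % u.length) := by
  conv_lhs => rw [← Nat.mod_add_div' i u.length, archJump_add_mul_length u hu hA]
  simp [archJumpMod]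

theorem iterate_archJump_mod (hA : ∀ a : A, a ∈ u) (k i : ℕ) :
    (archJump u hu)^[k] i % u.length = (archJumpMod u hu)^[k] (i % u.length) := by
  induction k with
  | zero => rfl
  | succ k ih => rw [iterate_succ_apply', iterate_succ_apply', archJump_mod u hu hA, ih]

theorem iterate_archJump_add_modEq_iff (hA : ∀ a : A, a ∈ u) (k p : ℕ) :
    (archJump u hu)^[k + p] 0 ≡ (archJump u hu)^[k] 0 [MOD u.length] ↔
      IsPeriodicPt (archJumpMod u hu) p ((archJumpMod u hu)^[k] 0) := by
  rw [Nat.ModEq, iterate_archJump_mod u hu hA, iterate_archJump_mod u hu hA, Nat.zero_mod,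
    IsPeriodicPt, IsFixedPt, ← iterate_add_apply, add_comm]

theorem archTransientIndex_add_archPeriod_le (hA : ∀ a : A, a ∈ u) {j m : ℕ} (hjm : j < m)
    (h : (archJump u hu)^[j] 0 ≡ (archJump u hu)^[m] 0 [MOD u.length]) :
    archTransientIndex u hu + archPeriod u hu ≤ m := by
  have hq : IsPeriodicPt (archJumpMod u hu) (m - j) ((archJumpMod u hu)^[j] 0) := by
    rw [← iterate_archJump_add_modEq_iff u hu hA, Nat.add_sub_cancel' hjm.le]
    exact h.symm
  have hmem : IsArchPeriodAt u hu 0 (m - j) :=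
    ⟨by omega, j, (iterate_archJump_add_modEq_iff u hu hA _ _).2 hq⟩
  have hP : archPeriod u hu ≤ m - j := Nat.sInf_le hmem
  obtain ⟨-, k, hk⟩ : IsArchPeriodAt u hu 0 (archPeriod u hu) :=
    Nat.sInf_mem (s := {p | IsArchPeriodAt u hu 0 p}) ⟨_, hmem⟩
  have hK : archTransientIndex u hu ≤ j := Nat.sInf_le <|
    (iterate_archJump_add_modEq_iff u hu hA _ _).2 <|
      hq.of_isPeriodicPt_iterate (by omega) ((iterate_archJump_add_modEq_iff u hu hA _ _).1 hk)
  omega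

theorem archTransient_add_archSpan (hA : ∀ a : A, a ∈ u) :
    archTransient u hu + archSpan u hu =
      (archJump u hu)^[archTransientIndex u hu + archPeriod u hu] 0 := by
  have := (strictMono_iterate_archJump u hu hA 0).monotone
    (Nat.le_add_right (archTransientIndex u hu) (archPeriod u hu))
  simp only [archSpan, archTransient] at this ⊢
  omega

end ArchJumpMod

/-- bounding transient plus span: `T_u + Δ_u ≤ (|A| + 1)·L`. -/
theorem stmt18 {A : Type*} [Fintype A] (u : List A) (hu : u ≠ [])
    (hA : ∀ a : A, a ∈ u) :
    archTransient u hu + archSpan u hu ≤ (Fintype.card A + 1) * u.length := by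
  obtain ⟨m, ⟨j, hjm, hrep⟩, hinj⟩ :=
    exists_repeat_injOn_Iio (f := fun k => (archJump u hu)^[k] 0 % u.length)
      (Set.finite_Iio u.length) fun k => Nat.mod_lt _ (List.length_pos_iff.mpr hu)
  rw [archTransient_add_archSpan u hu hA]
  calc _ ≤ (archJump u hu)^[m] 0 := (strictMono_iterate_archJump u hu hA 0).monotone
        (archTransientIndex_add_archPeriod_le u hu hA hjm hrep)
    _ ≤ _ := iterate_archJump_le_of_injOn u hu hA hinj
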